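/- arXiv:2111.01485 — 2 statements merged into one kernel-verified Lean document; each statement's English description precedes it below -/
import Mathlib

section
/- In the non-idempotent intersection type system for the lambda-calculus with explicit substitutions, a judgment Γ ⊢ (λx.t) u : τ is derivable if and only if Γ ⊢ t[x\u] : τ is derivable. -/
inductive Tm : Type
  | var : ℕ → Tm
  | lam : ℕ → Tm → Tm
  | app : Tm → Tm → Tm
  | es  : ℕ → Tm → Tm → Tm
  deriving DecidableEq

/-- Non-idempotent intersection types: `arr M τ` is `M → τ` where the
multiset `M` is represented as a list of types. -/
inductive Ty : Type
  | base : ℕ → Ty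
  | arr : List Ty → Ty → Ty

/-- A typing environment assigns to each variable a multiset of types. -/
abbrev Env := ℕ → List Ty

/-- Pointwise multiset union of environments. -/
def Env.add (Γ Δ : Env) : Env := fun x => Γ x ++ Δ x

/-- Sum of a list of environments. -/
def Env.sum (l : List Env) : Env := l.foldr Env.add (fun _ => [])

/-- The environment `x : [σ]`. -/
def Env.single (x : ℕ) (σ : Ty) : Env := fun y => if y = x then [σ] else []

/-- Remove the entry of `x` (used when discharging `Γ, x:M ⊢ …`). -/
def Env.remove (Γ : Env) (x : ℕ) : Env := fun y => if y = x then [] else Γ y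

/-- The non-idempotent intersection type system for terms with explicit
substitutions.  In `app`/`es`, the typings of the argument are given by a
list `Ds` of pairs (environment, type), whose types form the multiset `M`. -/
inductive Typing : Env → Tm → Ty → Prop
  | var (x : ℕ) (σ : Ty) : Typing (Env.single x σ) (.var x) σ
  | abs {Γ : Env} {t : Tm} {τ : Ty} (x : ℕ) :
      Typing Γ t τ → Typing (Γ.remove x) (.lam x t) (.arr (Γ x) τ)
  | app {Γ : Env} {t u : Tm} {τ : Ty} (Ds : List (Env × Ty)) :
      Typing Γ t (.arr (Ds.map Prod.snd) τ) →
      (∀ p ∈ Ds, Typing p.1 u p.2) →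
      Typing (Γ.add (Env.sum (Ds.map Prod.fst))) (.app t u) τ
  | es {Γ : Env} {t u : Tm} {τ : Ty} (x : ℕ) (Ds : List (Env × Ty)) :
      Typing Γ t τ →
      Γ x = Ds.map Prod.snd →
      (∀ p ∈ Ds, Typing p.1 u p.2) →
      Typing ((Γ.remove x).add (Env.sum (Ds.map Prod.fst))) (.es x t u) τ

theorem Typing.lam_inv {Δ : Env} {x : ℕ} {t : Tm} {M : List Ty} {τ : Ty}
    (h : Typing Δ (.lam x t) (.arr M τ)) :
    ∃ Γ, Typing Γ t τ ∧ Γ x = M ∧ Δ = Γ.remove x := by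
  generalize hM : Ty.arr M τ = σ at h
  cases h with
  | abs x ht =>
    cases hM
    exact ⟨_, ht, rfl, rfl⟩

theorem Typing.es_of_app_lam {Γ : Env} {x : ℕ} {t u : Tm} {τ : Ty}
    (h : Typing Γ (.app (.lam x t) u) τ) : Typing Γ (.es x t u) τ := by
  cases h with
  | app Ds hlam hu =>
    obtain ⟨Γ', ht, hx, rfl⟩ := hlam.lam_inv
    exact .es x Ds ht hx hu

theorem Typing.app_lam_of_es {Γ : Env} {x : ℕ} {t u : Tm} {τ : Ty}
    (h : Typing Γ (.es x t u) τ) : Typing Γ (.app (.lam x t) u) τ := by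
  cases h with
  | es x Ds ht hx hu =>
    have hlam : Typing _ (.lam x t) (.arr (Ds.map Prod.snd) _) := hx ▸ Typing.abs x ht
    exact .app Ds hlam hu

theorem typing_redex_iff_es (Γ : Env) (x : ℕ) (t u : Tm) (τ : Ty) :
    Typing Γ (.app (.lam x t) u) τ ↔ Typing Γ (.es x t u) τ :=
  ⟨Typing.es_of_app_lam, Typing.app_lam_of_es⟩
end

section
/- In the non-idempotent intersection type system with explicit substitutions, for any term t, Γ ⊢ t : τ is derivable if and only if Γ ⊢ t† : τ is derivable, where t† reverts all explicit substitutions of t into beta-redexes. -/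
/-- Reversion `t†`: turn all explicit substitutions back into β-redexes. -/
def revert : Tm → Tm
  | .var x => .var x
  | .lam x t => .lam x (revert t)
  | .app t u => .app (revert t) (revert u)
  | .es x t u => .app (.lam x (revert t)) (revert u)

/-! The rule (es) for `t[x\u]` is exactly the composite of (abs) and (app) on the redex
`(λx.t) u`, and every derivation for such a redex ends with these two rules. Hence reversion
preserves typings in both directions, by induction on the derivation, resp. on the term. -/

theorem Typing.app_lam {Γ : Env} {t u : Tm} {τ : Ty} {x : ℕ} {Ds : List (Env × Ty)}
    (ht : Typing Γ t τ) (hx : Γ x = Ds.map Prod.snd) (hu : ∀ p ∈ Ds, Typing p.1 u p.2) :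
    Typing ((Γ.remove x).add (Env.sum (Ds.map Prod.fst))) (.app (.lam x t) u) τ :=
  .app Ds (hx ▸ .abs x ht) hu

theorem Typing.app_lam_inv {Γ : Env} {t u : Tm} {τ : Ty} {x : ℕ}
    (h : Typing Γ (.app (.lam x t) u) τ) :
    ∃ (Δ : Env) (Ds : List (Env × Ty)), Typing Δ t τ ∧ Δ x = Ds.map Prod.snd ∧
      (∀ p ∈ Ds, Typing p.1 u p.2) ∧ Γ = (Δ.remove x).add (Env.sum (Ds.map Prod.fst)) := by
  cases h with
  | app Ds hlam hu =>
    generalize hσ : Ty.arr (Ds.map Prod.snd) τ = σ at hlam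
    cases hlam with
    | abs _ ht =>
      obtain ⟨hx, rfl⟩ := Ty.arr.inj hσ
      exact ⟨_, Ds, ht, hx.symm, hu, rfl⟩

theorem typing_revert_of_typing {Γ : Env} {t : Tm} {τ : Ty} (h : Typing Γ t τ) :
    Typing Γ (revert t) τ := by
  induction h with
  | var x σ => exact .var x σ
  | abs x _ ih => exact .abs x ih
  | app Ds _ _ iht ihu => exact .app Ds iht ihu
  | es x Ds _ hx _ iht ihu => exact .app_lam iht hx ihu

theorem typing_of_typing_revert {Γ : Env} {t : Tm} {τ : Ty} (h : Typing Γ (revert t) τ) :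
    Typing Γ t τ := by
  induction t generalizing Γ τ with
  | var x => cases h; exact .var _ _
  | lam x t ih =>
    cases h with
    | abs _ ht => exact .abs x (ih ht)
  | app t u iht ihu =>
    cases h with
    | app Ds ht hu => exact .app Ds (iht ht) fun p hp => ihu (hu p hp)
  | es x t u iht ihu =>
    obtain ⟨Δ, Ds, ht, hx, hu, rfl⟩ := Typing.app_lam_inv h
    exact .es x Ds (iht ht) hx fun p hp => ihu (hu p hp)

/-- typing is stable by reverting explicit substitutions. -/
theorem typing_iff_typing_revert (Γ : Env) (t : Tm) (τ : Ty) :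
    Typing Γ t τ ↔ Typing Γ (revert t) τ :=
  ⟨typing_revert_of_typing, typing_of_typing_revert⟩
end
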